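/- Let $\mathcal{X}$ and $\mathcal{Y}$ be finite alphabets with $|\mathcal{Y}| \geq 2$, and let $p_{XY}, q_{XY}$ be joint probability distributions on $\mathcal{X} \times \mathcal{Y}$. If $\varepsilon \in (0, 1 - 1/|\mathcal{Y}|]$ and $\tfrac{1}{2}\sum_{x,y} |p_{XY}(x,y) - q_{XY}(x,y)| \leq \varepsilon$, then $|H(Y|X)_p - H(Y|X)_q| \leq \varepsilon \log_2(|\mathcal{Y}| - 1) + h_2(\varepsilon)$. -/

import Mathlib

/-!
Measured in nats, `H(Y|X)_p = ∑ₓ E(p x)` with `E(α) = ∑ η(α y) - η(∑ α)`, `η = negMulLog`.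
For one fiber, Gibbs' inequality against `r = δ (1 + (κ - 1) β / B)` (where `B = ∑ β`), together
with `(1 + (κ - 1) b) / b ≥ κ` for `b ≤ 1`, gives
`E(α) - E(β) ≤ (∑ α) log δ⁻¹ - (∑ min α β) log κ` whenever `κ ≥ 1` and `r` is a sub-probability.
Summed over `x`, the overlap `∑ min p q = 1 - TV(p, q)` is at least `1 - ε`; the choice
`δ = ε / (|𝓨| - 1)`, `δ κ = 1 - ε` makes the bound `ε log (|𝓨| - 1) + h(ε)` (in nats).
-/

open scoped BigOperators

/-- Conditional Shannon entropy H(Y|X) of a joint distribution `p` on `𝓧 × 𝓨`,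
with the sum restricted to those `x` whose marginal `pₓ(x)` is positive and with
the convention `0 · log₂ 0 = 0` (automatic since `Real.logb 2 0 = 0`). -/
noncomputable def condShannonEntropy {𝓧 𝓨 : Type*} [Fintype 𝓧] [Fintype 𝓨]
    (p : 𝓧 → 𝓨 → ℝ) : ℝ :=
  -∑ x, if 0 < ∑ y, p x y then
      (∑ y, p x y) *
        ∑ y, (p x y / ∑ y', p x y') * Real.logb 2 (p x y / ∑ y', p x y')
    else 0

noncomputable def binEntropy (ε : ℝ) : ℝ :=
  -ε * Real.logb 2 ε - (1 - ε) * Real.logb 2 (1 - ε)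

section

open Real Finset

variable {𝓨 : Type*} [Fintype 𝓨]

/-- For `α ≥ 0` of mass `A = ∑ y, α y`, this is `A · H(α / A)` in nats. -/
noncomputable def unnormalizedEntropy (α : 𝓨 → ℝ) : ℝ :=
  ∑ y, negMulLog (α y) - negMulLog (∑ y, α y)

lemma unnormalizedEntropy_eq_mul_sum_negMulLog_div {β : 𝓨 → ℝ} (hβ : ∀ y, 0 ≤ β y) :
    unnormalizedEntropy β = (∑ y, β y) * ∑ y, negMulLog (β y / ∑ y', β y') := by
  set B := ∑ y, β y with hB
  rcases (sum_nonneg fun y _ => hβ y : 0 ≤ B).eq_or_lt with hB0 | hBpos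
  · have hzero : ∀ y, β y = 0 := fun y =>
      (sum_eq_zero_iff_of_nonneg fun y _ => hβ y).mp hB0.symm y (mem_univ y)
    simp [unnormalizedEntropy, hzero]
  · have hsplit : ∀ y, negMulLog (β y) =
        β y / B * negMulLog B + B * negMulLog (β y / B) := fun y => by
      rw [← negMulLog_mul, mul_div_cancel₀ _ hBpos.ne']
    rw [unnormalizedEntropy, ← hB, sum_congr rfl fun y _ => hsplit y, sum_add_distrib,
      ← sum_mul, ← sum_div, ← hB, div_self hBpos.ne', one_mul, ← mul_sum]
    ring

lemma negMulLog_add_mul_log_le_sub {a t : ℝ} (ha : 0 ≤ a) (ht : 0 < t) :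
    negMulLog a + a * log t ≤ t - a := by
  rcases ha.eq_or_lt with rfl | ha
  · simpa using ht.le
  have hlog : log (t / a) ≤ t / a - 1 := log_le_sub_one_of_pos (div_pos ht ha)
  calc negMulLog a + a * log t = a * log (t / a) := by
        rw [negMulLog, log_div ht.ne' ha.ne']; ring
    _ ≤ a * (t / a - 1) := mul_le_mul_of_nonneg_left hlog ha.le
    _ = t - a := by field_simp

/-- Gibbs' inequality. -/
lemma unnormalizedEntropy_le_neg_sum_mul_log {α r : 𝓨 → ℝ} (hα : ∀ y, 0 ≤ α y)
    (hr : ∀ y, 0 < r y) (hr1 : ∑ y, r y ≤ 1) :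
    unnormalizedEntropy α ≤ -∑ y, α y * log (r y) := by
  set A := ∑ y, α y with hA
  rcases (sum_nonneg fun y _ => hα y : 0 ≤ A).eq_or_lt with hA0 | hApos
  · have hzero : ∀ y, α y = 0 := fun y =>
      (sum_eq_zero_iff_of_nonneg fun y _ => hα y).mp hA0.symm y (mem_univ y)
    simp [unnormalizedEntropy, hzero]
  · have hterm : ∀ y, negMulLog (α y) + α y * log (r y) + α y * log A ≤ A * r y - α y :=
      fun y => by
        have := negMulLog_add_mul_log_le_sub (hα y) (mul_pos hApos (hr y))
        rwa [log_mul hApos.ne' (hr y).ne', mul_add, ← add_assoc, add_right_comm] at this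
    have hsum := sum_le_sum fun y (_ : y ∈ univ) => hterm y
    simp only [sum_add_distrib, sum_sub_distrib, ← sum_mul, ← mul_sum, ← hA] at hsum
    have hAr : A * ∑ y, r y ≤ A := mul_le_of_le_one_right hApos.le hr1
    rw [unnormalizedEntropy, ← hA, negMulLog]
    linarith

lemma mul_log_le_mul_log_one_add_add_mul_negMulLog {κ b m a B : ℝ} (hκ : 1 ≤ κ)
    (hb0 : 0 ≤ b) (hb1 : b ≤ 1) (hm : 0 ≤ m) (hma : m ≤ a) (hmB : m ≤ B * b) :
    m * log κ ≤ a * log (1 + (κ - 1) * b) + B * negMulLog b := by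
  rcases hb0.eq_or_lt with rfl | hb
  · simp [le_antisymm (by simpa using hmB) hm]
  have hone : 1 ≤ 1 + (κ - 1) * b := by nlinarith
  have hlog_one_add : 0 ≤ log (1 + (κ - 1) * b) := log_nonneg hone
  have hneg_log_b : 0 ≤ -log b := neg_nonneg.mpr (log_nonpos hb0 hb1)
  have hκ_le : κ ≤ (1 + (κ - 1) * b) / b := by
    rw [le_div_iff₀ hb]; nlinarith
  calc m * log κ ≤ m * log ((1 + (κ - 1) * b) / b) :=
        mul_le_mul_of_nonneg_left (log_le_log (by linarith) hκ_le) hm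
    _ = m * log (1 + (κ - 1) * b) + m * -log b := by
        rw [log_div (by linarith) hb.ne']; ring
    _ ≤ a * log (1 + (κ - 1) * b) + (B * b) * -log b := by
        gcongr
    _ = a * log (1 + (κ - 1) * b) + B * negMulLog b := by
        rw [negMulLog]; ring

lemma unnormalizedEntropy_sub_le {α β : 𝓨 → ℝ} (hα : ∀ y, 0 ≤ α y) (hβ : ∀ y, 0 ≤ β y)
    {δ κ : ℝ} (hδ : 0 < δ) (hκ : 1 ≤ κ) (hδκ : δ * (Fintype.card 𝓨 + κ - 1) ≤ 1) :
    unnormalizedEntropy α - unnormalizedEntropy β ≤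
      (∑ y, α y) * log δ⁻¹ - (∑ y, min (α y) (β y)) * log κ := by
  set B := ∑ y, β y with hB
  set b : 𝓨 → ℝ := fun y => β y / B with hb
  have hβ_le : ∀ y, β y ≤ B := fun y => single_le_sum (fun y _ => hβ y) (mem_univ y)
  have hB0 : 0 ≤ B := sum_nonneg fun y _ => hβ y
  have hb0 : ∀ y, 0 ≤ b y := fun y => div_nonneg (hβ y) hB0
  have hb1 : ∀ y, b y ≤ 1 := fun y => div_le_one_of_le₀ (hβ_le y) hB0
  have hβ_eq : ∀ y, β y = B * b y := fun y => by
    rw [hb, ← mul_div_assoc, mul_div_cancel_left_of_imp]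
    intro hB_zero; exact le_antisymm (hB_zero ▸ hβ_le y) (hβ y)
  -- Compare `α` with the mixture `r` of the uniform law and `β / B` through Gibbs' inequality.
  have hone_pos : ∀ y, 0 < 1 + (κ - 1) * b y := fun y => by nlinarith [hb0 y]
  set r : 𝓨 → ℝ := fun y => δ * (1 + (κ - 1) * b y) with hr
  have hr_pos : ∀ y, 0 < r y := fun y => mul_pos hδ (hone_pos y)
  have hr_sum : ∑ y, r y ≤ 1 := by
    have hb_sum : ∑ y, b y ≤ 1 := by rw [hb, ← sum_div, ← hB]; exact div_self_le_one B
    calc ∑ y, r y = δ * (Fintype.card 𝓨 + (κ - 1) * ∑ y, b y) := by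
          simp only [hr, ← mul_sum, sum_add_distrib, sum_const, card_univ, nsmul_eq_mul, mul_one]
      _ ≤ δ * (Fintype.card 𝓨 + κ - 1) := by gcongr; nlinarith
      _ ≤ 1 := hδκ
  have hlog_r : ∀ y, -(α y * log (r y)) = α y * log δ⁻¹ - α y * log (1 + (κ - 1) * b y) :=
    fun y => by rw [hr, log_mul hδ.ne' (hone_pos y).ne', log_inv]; ring
  have hpoint : ∀ y, min (α y) (β y) * log κ ≤
      α y * log (1 + (κ - 1) * b y) + B * negMulLog (b y) := fun y =>
    mul_log_le_mul_log_one_add_add_mul_negMulLog hκ (hb0 y) (hb1 y) (le_min (hα y) (hβ y))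
      (min_le_left _ _) (hβ_eq y ▸ min_le_right _ _)
  have hgibbs := unnormalizedEntropy_le_neg_sum_mul_log hα hr_pos hr_sum
  rw [← sum_neg_distrib, sum_congr rfl fun y _ => hlog_r y, sum_sub_distrib, ← sum_mul] at hgibbs
  have hsum := sum_le_sum fun y (_ : y ∈ univ) => hpoint y
  rw [← sum_mul, sum_add_distrib, ← mul_sum] at hsum
  rw [unnormalizedEntropy_eq_mul_sum_negMulLog_div hβ]
  linarith

lemma log_inv_sub_mul_log_eq_mul_log_add_binEntropy {K ε : ℝ} (hK : 1 < K) (hε0 : 0 < ε)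
    (hε1 : ε < 1) :
    log (ε / (K - 1))⁻¹ - (1 - ε) * log ((1 - ε) / (ε / (K - 1))) =
      ε * log (K - 1) + Real.binEntropy ε := by
  have hK1 : K - 1 ≠ 0 := (sub_pos.2 hK).ne'
  rw [Real.binEntropy, log_inv, log_inv, log_inv, log_div (sub_pos.2 hε1).ne'
    (div_pos hε0 (sub_pos.2 hK)).ne', log_div hε0.ne' hK1]
  ring

lemma binEntropy_eq_div_log_two (ε : ℝ) : _root_.binEntropy ε = Real.binEntropy ε / log 2 := by
  rw [_root_.binEntropy, Real.binEntropy, logb, logb, log_inv, log_inv]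
  ring

variable {𝓧 : Type*} [Fintype 𝓧]

lemma sum_unnormalizedEntropy_sub_le {p q : 𝓧 → 𝓨 → ℝ} (hp : ∀ x y, 0 ≤ p x y)
    (hq : ∀ x y, 0 ≤ q x y) (hp1 : ∑ x, ∑ y, p x y = 1)
    {δ κ : ℝ} (hδ : 0 < δ) (hκ : 1 ≤ κ) (hδκ : δ * (Fintype.card 𝓨 + κ - 1) ≤ 1) :
    ∑ x, unnormalizedEntropy (p x) - ∑ x, unnormalizedEntropy (q x) ≤
      log δ⁻¹ - (∑ x, ∑ y, min (p x y) (q x y)) * log κ := by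
  rw [← sum_sub_distrib]
  calc _ ≤ ∑ x, ((∑ y, p x y) * log δ⁻¹ - (∑ y, min (p x y) (q x y)) * log κ) :=
        sum_le_sum fun x _ => unnormalizedEntropy_sub_le (hp x) (hq x) hδ hκ hδκ
    _ = _ := by rw [sum_sub_distrib, ← sum_mul, ← sum_mul, hp1, one_mul]

lemma one_sub_le_sum_sum_min {p q : 𝓧 → 𝓨 → ℝ} (hp1 : ∑ x, ∑ y, p x y = 1)
    (hq1 : ∑ x, ∑ y, q x y = 1) {ε : ℝ} (htv : (1 / 2) * ∑ x, ∑ y, |p x y - q x y| ≤ ε) :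
    1 - ε ≤ ∑ x, ∑ y, min (p x y) (q x y) := by
  have hmin : ∀ a b : ℝ, min a b = (a + b - |a - b|) / 2 := fun a b => by
    linarith [min_add_max a b, max_sub_min_eq_abs' a b]
  simp only [hmin, ← sum_div, sum_sub_distrib, sum_add_distrib]
  rw [hp1, hq1]
  linarith

lemma condShannonEntropy_eq_sum_unnormalizedEntropy_div {p : 𝓧 → 𝓨 → ℝ}
    (hp : ∀ x y, 0 ≤ p x y) :
    condShannonEntropy p = (∑ x, unnormalizedEntropy (p x)) / log 2 := by
  have hfiber : ∀ x, (if 0 < ∑ y, p x y then (∑ y, p x y) *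
        ∑ y, (p x y / ∑ y', p x y') * logb 2 (p x y / ∑ y', p x y') else 0) =
      -(unnormalizedEntropy (p x) / log 2) := fun x => by
    rw [unnormalizedEntropy_eq_mul_sum_negMulLog_div (hp x), ite_eq_left_iff.mpr]
    · simp only [logb, negMulLog, mul_sum, sum_div, ← sum_neg_distrib]
      exact sum_congr rfl fun y _ => by ring
    · intro hpos
      rw [le_antisymm (not_lt.mp hpos) (sum_nonneg fun y _ => hp x y), zero_mul]
  rw [condShannonEntropy, sum_congr rfl fun x _ => hfiber x, sum_neg_distrib, neg_neg, sum_div]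


lemma abs_sum_unnormalizedEntropy_sub_le {p q : 𝓧 → 𝓨 → ℝ} (hY : 1 < Fintype.card 𝓨)
    (hp : ∀ x y, 0 ≤ p x y) (hp1 : ∑ x, ∑ y, p x y = 1)
    (hq : ∀ x y, 0 ≤ q x y) (hq1 : ∑ x, ∑ y, q x y = 1)
    {ε : ℝ} (hε0 : 0 < ε) (hε1 : ε ≤ 1 - 1 / (Fintype.card 𝓨 : ℝ))
    (htv : (1 / 2) * ∑ x, ∑ y, |p x y - q x y| ≤ ε) :
    |∑ x, unnormalizedEntropy (p x) - ∑ x, unnormalizedEntropy (q x)| ≤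
      ε * log ((Fintype.card 𝓨 : ℝ) - 1) + Real.binEntropy ε := by
  have hK : 1 < (Fintype.card 𝓨 : ℝ) := by exact_mod_cast hY
  set K : ℝ := (Fintype.card 𝓨 : ℝ)
  have hK1 : 0 < K - 1 := sub_pos.2 hK
  have hεK : ε * K ≤ K - 1 := by
    have := mul_le_mul_of_nonneg_right hε1 (by positivity : (0 : ℝ) ≤ K)
    rwa [sub_mul, one_div_mul_cancel (by positivity), one_mul] at this
  have hε1' : ε < 1 := by nlinarith
  have hδ : 0 < ε / (K - 1) := div_pos hε0 hK1
  have hκ : 1 ≤ (1 - ε) / (ε / (K - 1)) := by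
    rw [one_le_div hδ, div_le_iff₀ hK1]; nlinarith
  have hδκ : ε / (K - 1) * (K + (1 - ε) / (ε / (K - 1)) - 1) ≤ 1 :=
    le_of_eq (by field_simp; ring)
  have hpq := sum_unnormalizedEntropy_sub_le hp hq hp1 hδ hκ hδκ
  have hqp := sum_unnormalizedEntropy_sub_le hq hp hq1 hδ hκ hδκ
  simp only [min_comm (q _ _)] at hqp
  have hM := one_sub_le_sum_sum_min hp1 hq1 htv
  have hlogκ := log_nonneg hκ
  rw [← log_inv_sub_mul_log_eq_mul_log_add_binEntropy hK hε0 hε1']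
  exact abs_sub_le_iff.2 ⟨by nlinarith, by nlinarith⟩

end

/-- Alhejji–Smith optimal uniform continuity bound for classical conditional
Shannon entropy. -/
theorem classical_conditional_entropy_uniform_continuity
    {𝓧 𝓨 : Type*} [Fintype 𝓧] [Fintype 𝓨] (hY : 2 ≤ Fintype.card 𝓨)
    (p q : 𝓧 → 𝓨 → ℝ)
    (hp : ∀ x y, 0 ≤ p x y) (hp1 : ∑ x, ∑ y, p x y = 1)
    (hq : ∀ x y, 0 ≤ q x y) (hq1 : ∑ x, ∑ y, q x y = 1)
    (ε : ℝ) (hε0 : 0 < ε) (hε1 : ε ≤ 1 - 1 / (Fintype.card 𝓨 : ℝ))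
    (htv : (1 / 2) * ∑ x, ∑ y, |p x y - q x y| ≤ ε) :
    |condShannonEntropy p - condShannonEntropy q| ≤
      ε * Real.logb 2 ((Fintype.card 𝓨 : ℝ) - 1) + binEntropy ε := by
  have hlog2 : 0 < Real.log 2 := Real.log_pos one_lt_two
  rw [condShannonEntropy_eq_sum_unnormalizedEntropy_div hp,
    condShannonEntropy_eq_sum_unnormalizedEntropy_div hq, binEntropy_eq_div_log_two, Real.logb,
    ← sub_div, abs_div, abs_of_pos hlog2, mul_div_assoc', ← add_div]
  exact div_le_div_of_nonneg_right
    (abs_sum_unnormalizedEntropy_sub_le hY hp hp1 hq hq1 hε0 hε1 htv) hlog2.le
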